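/- Let φ : 𝒳 → Prop be a predicate with P(φ(X)) ≤ ε and P(φ(X_cf) ∧ ¬φ(X)) = γ. For any classifier h : 𝒳 → Bool, there exists a classifier h₁ with P(h(X) ≠ h₁(X)) ≤ ε and influence ι(h₁) = P(h₁(X) ≠ h₁(X_cf)) ≥ γ/2. -/

import Mathlib

/-!
Flip `h` to a constant `b` on the region `φ`: the new classifier disagrees with `h` only where
`φ (X)` holds, and on the event `φ (X_cf) ∧ ¬ φ (X)` it separates `X` from `X_cf` exactly when
`h (X) ≠ b`. The two choices of `b` split the probability `γ` of that event, so one of them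
gets at least `γ / 2`.
-/

open Finset

noncomputable def Pr {Ω : Type*} [Fintype Ω] (p : Ω → ℝ) (E : Ω → Prop) [DecidablePred E] : ℝ :=
  ∑ ω, if E ω then p ω else 0

section Pr

variable {Ω : Type*} [Fintype Ω] (p : Ω → ℝ)

lemma Pr_mono (hp : ∀ ω, 0 ≤ p ω) {E F : Ω → Prop} [DecidablePred E] [DecidablePred F]
    (hEF : ∀ ω, E ω → F ω) : Pr p E ≤ Pr p F :=
  sum_le_sum fun ω _ => by
    by_cases hE : E ω
    · simp [hE, hEF ω hE]
    · by_cases hF : F ω <;> simp [hE, hF, hp ω]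

lemma Pr_and_add_Pr_and_not (A B : Ω → Prop) [DecidablePred A] [DecidablePred B] :
    Pr p (fun ω => A ω ∧ B ω) + Pr p (fun ω => A ω ∧ ¬B ω) = Pr p A := by
  rw [Pr, Pr, ← sum_add_distrib]
  refine sum_congr rfl fun ω _ => ?_
  by_cases hA : A ω <;> by_cases hB : B ω <;> simp [hA, hB]

lemma exists_half_Pr_le_Pr_and_ne (A : Ω → Prop) [DecidablePred A] (f : Ω → Bool) :
    ∃ b : Bool, Pr p A / 2 ≤ Pr p (fun ω => A ω ∧ f ω ≠ b) := by
  have hsplit := Pr_and_add_Pr_and_not p A (fun ω => f ω ≠ true)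
  simp only [ne_eq, not_not] at hsplit
  by_cases hle : Pr p A / 2 ≤ Pr p (fun ω => A ω ∧ ¬f ω = true)
  · exact ⟨true, hle⟩
  · exact ⟨false, by simp only [ne_eq, Bool.not_eq_false]; linarith⟩

end Pr

section overwriteOn

variable {𝒳 : Type*} (φ : 𝒳 → Prop) [DecidablePred φ] (b : Bool) (h : 𝒳 → Bool)

def overwriteOn : 𝒳 → Bool := fun x => if φ x then b else h x

variable {Ω : Type*} [Fintype Ω] (p : Ω → ℝ) (hp : ∀ ω, 0 ≤ p ω) (X Xcf : Ω → 𝒳)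
include hp

lemma Pr_ne_overwriteOn_le :
    Pr p (fun ω => h (X ω) ≠ overwriteOn φ b h (X ω)) ≤ Pr p (fun ω => φ (X ω)) :=
  Pr_mono p hp fun ω hne => by
    by_contra hφ
    simp [overwriteOn, hφ] at hne

lemma Pr_and_ne_le_Pr_overwriteOn_ne :
    Pr p (fun ω => (φ (Xcf ω) ∧ ¬φ (X ω)) ∧ h (X ω) ≠ b) ≤
      Pr p (fun ω => overwriteOn φ b h (X ω) ≠ overwriteOn φ b h (Xcf ω)) :=
  Pr_mono p hp fun ω ⟨⟨hcf, hX⟩, hne⟩ => by simp [overwriteOn, hcf, hX, hne]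

end overwriteOn

theorem exists_high_influence_general {Ω 𝒳 : Type*} [Fintype Ω]
    (p : Ω → ℝ) (hp : ∀ ω, 0 ≤ p ω)
    (X Xcf : Ω → 𝒳) (φ : 𝒳 → Prop) [DecidablePred φ] (ε γ : ℝ)
    (hε : Pr p (fun ω => φ (X ω)) ≤ ε)
    (hγ : Pr p (fun ω => φ (Xcf ω) ∧ ¬φ (X ω)) = γ)
    (h : 𝒳 → Bool) :
    ∃ h₁ : 𝒳 → Bool,
      Pr p (fun ω => h (X ω) ≠ h₁ (X ω)) ≤ ε ∧
      γ / 2 ≤ Pr p (fun ω => h₁ (X ω) ≠ h₁ (Xcf ω)) := by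
  obtain ⟨b, hb⟩ := exists_half_Pr_le_Pr_and_ne p (fun ω => φ (Xcf ω) ∧ ¬φ (X ω)) (h ∘ X)
  refine ⟨overwriteOn φ b h, (Pr_ne_overwriteOn_le φ b h p hp X).trans hε, ?_⟩
  rw [← hγ]
  exact hb.trans (Pr_and_ne_le_Pr_overwriteOn_ne φ b h p hp X Xcf)

/-- Half of Theorem 1: there exists a classifier `h₁` close to `h` on the data
distribution with influence at least `γ/2`. -/
theorem exists_high_influence {Ω 𝒳 : Type*} [Fintype Ω] [Fintype 𝒳] [DecidableEq 𝒳]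
    (p : Ω → ℝ) (hp : ∀ ω, 0 ≤ p ω) (hsum : ∑ ω, p ω = 1)
    (X Xcf : Ω → 𝒳) (φ : 𝒳 → Prop) [DecidablePred φ] (ε γ : ℝ)
    (hε : Pr p (fun ω => φ (X ω)) ≤ ε)
    (hγ : Pr p (fun ω => φ (Xcf ω) ∧ ¬φ (X ω)) = γ)
    (h : 𝒳 → Bool) :
    ∃ h₁ : 𝒳 → Bool,
      Pr p (fun ω => h (X ω) ≠ h₁ (X ω)) ≤ ε ∧
      γ / 2 ≤ Pr p (fun ω => h₁ (X ω) ≠ h₁ (Xcf ω)) :=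
  exists_high_influence_general p hp X Xcf φ ε γ hε hγ h
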